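/- Let G be a group and F a field. The F-linear span of the elements ĝ = g − g⁻¹ (for g ∈ G) inside the group algebra FG is closed under the commutator bracket [x, y] = xy − yx, and hence is a Lie subalgebra of FG. -/

import Mathlib

/-- The Plesken Lie algebra: the span of the elements `g - g⁻¹` in the group algebra. -/
noncomputable def plesken (F : Type*) (G : Type*) [Field F] [Group G] : Submodule F (MonoidAlgebra F G) :=
  Submodule.span F {a | ∃ g : G, a = MonoidAlgebra.of F G g - MonoidAlgebra.of F G g⁻¹}

lemma hat_mem (F : Type*) (G : Type*) [Field F] [Group G] (g : G) :
    MonoidAlgebra.of F G g - MonoidAlgebra.of F G g⁻¹ ∈ plesken F G :=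
  Submodule.subset_span ⟨g, rfl⟩

lemma bracket_gen (F : Type*) (G : Type*) [Field F] [Group G] (g h : G) :
    (MonoidAlgebra.of F G g - MonoidAlgebra.of F G g⁻¹) *
      (MonoidAlgebra.of F G h - MonoidAlgebra.of F G h⁻¹) -
    (MonoidAlgebra.of F G h - MonoidAlgebra.of F G h⁻¹) *
      (MonoidAlgebra.of F G g - MonoidAlgebra.of F G g⁻¹) ∈ plesken F G := by
  have key : (MonoidAlgebra.of F G g - MonoidAlgebra.of F G g⁻¹) *
      (MonoidAlgebra.of F G h - MonoidAlgebra.of F G h⁻¹) -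
    (MonoidAlgebra.of F G h - MonoidAlgebra.of F G h⁻¹) *
      (MonoidAlgebra.of F G g - MonoidAlgebra.of F G g⁻¹)
    = (MonoidAlgebra.of F G (g * h) - MonoidAlgebra.of F G (g * h)⁻¹)
      - (MonoidAlgebra.of F G (g * h⁻¹) - MonoidAlgebra.of F G (g * h⁻¹)⁻¹)
      - (MonoidAlgebra.of F G (g⁻¹ * h) - MonoidAlgebra.of F G (g⁻¹ * h)⁻¹)
      + (MonoidAlgebra.of F G (g⁻¹ * h⁻¹) - MonoidAlgebra.of F G (g⁻¹ * h⁻¹)⁻¹) := by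
    simp only [mul_inv_rev, inv_inv, map_mul]
    noncomm_ring
  rw [key]
  exact add_mem (sub_mem (sub_mem (hat_mem F G _) (hat_mem F G _)) (hat_mem F G _))
    (hat_mem F G _)

/-- The span of the elements `ĝ = g - g⁻¹` is closed under the commutator bracket,
hence is a Lie subalgebra of `FG`. -/
theorem plesken_closed_under_bracket
    (F : Type*) (G : Type*) [Field F] [Group G] :
    ∀ x ∈ plesken F G, ∀ y ∈ plesken F G, x * y - y * x ∈ plesken F G := by
  intro x hx
  induction hx using Submodule.span_induction with
  | mem a ha =>
    obtain ⟨g, rfl⟩ := ha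
    intro y hy
    induction hy using Submodule.span_induction with
    | mem b hb =>
      obtain ⟨h, rfl⟩ := hb
      exact bracket_gen F G g h
    | zero => simpa using (plesken F G).zero_mem
    | add y z _ _ hy hz =>
      have : (MonoidAlgebra.of F G g - MonoidAlgebra.of F G g⁻¹) * (y + z) -
          (y + z) * (MonoidAlgebra.of F G g - MonoidAlgebra.of F G g⁻¹) =
          ((MonoidAlgebra.of F G g - MonoidAlgebra.of F G g⁻¹) * y -
            y * (MonoidAlgebra.of F G g - MonoidAlgebra.of F G g⁻¹)) +
          ((MonoidAlgebra.of F G g - MonoidAlgebra.of F G g⁻¹) * z -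
            z * (MonoidAlgebra.of F G g - MonoidAlgebra.of F G g⁻¹)) := by noncomm_ring
      rw [this]; exact add_mem hy hz
    | smul c y _ hy =>
      have : (MonoidAlgebra.of F G g - MonoidAlgebra.of F G g⁻¹) * (c • y) -
          (c • y) * (MonoidAlgebra.of F G g - MonoidAlgebra.of F G g⁻¹) =
          c • ((MonoidAlgebra.of F G g - MonoidAlgebra.of F G g⁻¹) * y -
            y * (MonoidAlgebra.of F G g - MonoidAlgebra.of F G g⁻¹)) := by
        simp [mul_smul_comm, smul_mul_assoc, smul_sub]
      rw [this]; exact Submodule.smul_mem _ _ hy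
  | zero => intro y hy; simpa using (plesken F G).zero_mem
  | add x z _ _ hx hz =>
    intro y hy
    have : (x + z) * y - y * (x + z) = (x * y - y * x) + (z * y - y * z) := by noncomm_ring
    rw [this]; exact add_mem (hx y hy) (hz y hy)
  | smul c x _ hx =>
    intro y hy
    have : (c • x) * y - y * (c • x) = c • (x * y - y * x) := by
      simp [mul_smul_comm, smul_mul_assoc, smul_sub]
    rw [this]; exact Submodule.smul_mem _ _ (hx y hy)
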